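/- Weak duality for ε-insensitive smoothing: for every tuple (x̃_0, w̃_0,…,w̃_{N−1}, η̃_1,…,η̃_N) with |η̃_k| ≤ ε componentwise for all k, where x̃_1,…,x̃_N are generated by x̃_{k+1} = A x̃_k + B w̃_k, and for every Θ ∈ ℝ^{Nm}, one has J(x̃_0, w̃, η̃) ≥ −½ΘᵀMΘ − ε̄ᵀ|Θ| + ΘᵀY, where |Θ| is the componentwise absolute value of Θ. -/

import Mathlib

open Matrix

/-- State trajectory generated by `x_{k+1} = A x_k + B w_k` from initial state `x0`. -/
def traj {n l : ℕ} (A : Matrix (Fin n) (Fin n) ℝ) (B : Matrix (Fin n) (Fin l) ℝ)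
    (x0 : Fin n → ℝ) (w : ℕ → Fin l → ℝ) : ℕ → Fin n → ℝ
  | 0 => x0
  | k + 1 => A *ᵥ traj A B x0 w k + B *ᵥ w k

/-- The ε-insensitive cost `J`. -/
noncomputable def epsCost {n l m : ℕ} (N : ℕ)
    (A : Matrix (Fin n) (Fin n) ℝ) (B : Matrix (Fin n) (Fin l) ℝ)
    (C : Matrix (Fin m) (Fin n) ℝ)
    (P : Matrix (Fin n) (Fin n) ℝ) (Q : Matrix (Fin l) (Fin l) ℝ)
    (R : Matrix (Fin m) (Fin m) ℝ)
    (xbar : Fin n → ℝ) (y : ℕ → Fin m → ℝ)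
    (x0 : Fin n → ℝ) (w : ℕ → Fin l → ℝ) (η : Fin N → Fin m → ℝ) : ℝ :=
  (1 / 2) * ((x0 - xbar) ⬝ᵥ P *ᵥ (x0 - xbar)
    + ∑ k ∈ Finset.range N, w k ⬝ᵥ Q *ᵥ w k
    + ∑ k : Fin N,
        (y ((k : ℕ) + 1) - C *ᵥ traj A B x0 w ((k : ℕ) + 1) - η k) ⬝ᵥ
          R *ᵥ (y ((k : ℕ) + 1) - C *ᵥ traj A B x0 w ((k : ℕ) + 1) - η k))

/-- The block lower-triangular matrix `F` whose `(k, i)` block is `C A^{k−1−i} B`. -/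
def Fmat {n l m : ℕ} (N : ℕ) (A : Matrix (Fin n) (Fin n) ℝ) (B : Matrix (Fin n) (Fin l) ℝ)
    (C : Matrix (Fin m) (Fin n) ℝ) : Matrix (Fin N × Fin m) (Fin N × Fin l) ℝ :=
  fun p q => if (q.1 : ℕ) ≤ (p.1 : ℕ) then (C * A ^ ((p.1 : ℕ) - (q.1 : ℕ)) * B) p.2 q.2 else 0

/-- Block-diagonal matrix with `N` diagonal blocks `Q⁻¹`. -/
noncomputable def Qinv {l : ℕ} (N : ℕ) (Q : Matrix (Fin l) (Fin l) ℝ) :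
    Matrix (Fin N × Fin l) (Fin N × Fin l) ℝ :=
  fun p q => if p.1 = q.1 then Q⁻¹ p.2 q.2 else 0

/-- Block-diagonal matrix with `N` diagonal blocks `R⁻¹`. -/
noncomputable def Rinv {m : ℕ} (N : ℕ) (R : Matrix (Fin m) (Fin m) ℝ) :
    Matrix (Fin N × Fin m) (Fin N × Fin m) ℝ :=
  fun p q => if p.1 = q.1 then R⁻¹ p.2 q.2 else 0

/-- The vertical stack `O` of `C A, C A², …, C A^N`. -/
def Omat {n m : ℕ} (N : ℕ) (A : Matrix (Fin n) (Fin n) ℝ) (C : Matrix (Fin m) (Fin n) ℝ) :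
    Matrix (Fin N × Fin m) (Fin n) ℝ :=
  fun p c => (C * A ^ ((p.1 : ℕ) + 1)) p.2 c

/-- The stacked vector `Y` of `y_k − C A^k x̄0`, `k = 1, …, N`. -/
def Yvec {n m : ℕ} (N : ℕ) (A : Matrix (Fin n) (Fin n) ℝ) (C : Matrix (Fin m) (Fin n) ℝ)
    (xbar : Fin n → ℝ) (y : ℕ → Fin m → ℝ) : (Fin N × Fin m) → ℝ :=
  fun p => y ((p.1 : ℕ) + 1) p.2 - ((C * A ^ ((p.1 : ℕ) + 1)) *ᵥ xbar) p.2

/-- `M = F Q_inv Fᵀ + R_inv + O P⁻¹ Oᵀ`. -/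
noncomputable def Mmat {n l m : ℕ} (N : ℕ)
    (A : Matrix (Fin n) (Fin n) ℝ) (B : Matrix (Fin n) (Fin l) ℝ)
    (C : Matrix (Fin m) (Fin n) ℝ)
    (P : Matrix (Fin n) (Fin n) ℝ) (Q : Matrix (Fin l) (Fin l) ℝ)
    (R : Matrix (Fin m) (Fin m) ℝ) : Matrix (Fin N × Fin m) (Fin N × Fin m) ℝ :=
  Fmat N A B C * Qinv N Q * (Fmat N A B C)ᵀ + Rinv N R + Omat N A C * P⁻¹ * (Omat N A C)ᵀ

/-!
Stacking the measurements gives `Y = r + O (x̃₀ - x̄₀) + F w̃ + η̃`, where `r` stacks the residuals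
`y_k - C x̃_k - η̃_k`, while `ΘᵀMΘ` splits into the quadratic forms of `FᵀΘ`, `Θ` and `OᵀΘ` under
`Q_inv`, `R_inv` and `P⁻¹`. Pairing each of the first three summands of `ΘᵀY` with the matching
term of `J` through the Fenchel–Young inequality `aᵀz ≤ ½ zᵀSz + ½ aᵀS⁻¹a`, and bounding
`Θᵀη̃ ≤ ε̄ᵀ|Θ|`, gives the claim.
-/

open scoped Kronecker

namespace Matrix

variable {ι κ : Type*} [Fintype ι] [Fintype κ]

theorem dotProduct_mul_mul_transpose_mulVec (X : Matrix ι κ ℝ) (D : Matrix κ κ ℝ) (u : ι → ℝ) :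
    u ⬝ᵥ (X * D * Xᵀ) *ᵥ u = (u ᵥ* X) ⬝ᵥ D *ᵥ (u ᵥ* X) := by
  rw [← mulVec_mulVec, ← mulVec_mulVec, dotProduct_mulVec, mulVec_transpose]

theorem PosDef.dotProduct_le_half_quad_add_half_quad_inv [DecidableEq κ] {S : Matrix κ κ ℝ}
    (hS : S.PosDef) (a z : κ → ℝ) :
    a ⬝ᵥ z ≤ 1 / 2 * (z ⬝ᵥ S *ᵥ z) + 1 / 2 * (a ⬝ᵥ S⁻¹ *ᵥ a) := by
  have hsymm : Sᵀ = S := hS.1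
  set c := S⁻¹ *ᵥ a
  have hSc : S *ᵥ c = a := by
    rw [mulVec_mulVec, S.mul_nonsing_inv (isUnit_iff_ne_zero.mpr hS.det_pos.ne'), one_mulVec]
  have hcz : c ⬝ᵥ S *ᵥ z = a ⬝ᵥ z := by
    rw [dotProduct_mulVec, ← mulVec_transpose, hsymm, hSc]
  have hzc : z ⬝ᵥ S *ᵥ c = a ⬝ᵥ z := by rw [hSc, dotProduct_comm]
  have hcc : c ⬝ᵥ S *ᵥ c = a ⬝ᵥ S⁻¹ *ᵥ a := by rw [hSc, dotProduct_comm]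
  have hsq : 0 ≤ (z - c) ⬝ᵥ S *ᵥ (z - c) := hS.posSemidef.dotProduct_mulVec_nonneg (z - c)
  rw [mulVec_sub, sub_dotProduct, dotProduct_sub, dotProduct_sub, hcz, hzc, hcc] at hsq
  linarith

theorem dotProduct_prod (u v : ι × κ → ℝ) :
    u ⬝ᵥ v = ∑ i, (fun j => u (i, j)) ⬝ᵥ (fun j => v (i, j)) := by
  simp only [dotProduct, Fintype.sum_prod_type]

theorem dotProduct_one_kronecker_mulVec [DecidableEq ι] (D : Matrix κ κ ℝ) (v : ι × κ → ℝ) :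
    v ⬝ᵥ ((1 : Matrix ι ι ℝ) ⊗ₖ D) *ᵥ v
      = ∑ i, (fun j => v (i, j)) ⬝ᵥ D *ᵥ (fun j => v (i, j)) := by
  simp [dotProduct, mulVec, Fintype.sum_prod_type, one_apply, ite_mul, Finset.mul_sum]

theorem PosDef.dotProduct_le_sum_quad_add_quad_one_kronecker_inv [DecidableEq ι] [DecidableEq κ]
    {S : Matrix κ κ ℝ} (hS : S.PosDef) (u v : ι × κ → ℝ) :
    u ⬝ᵥ v ≤ 1 / 2 * ∑ i, (fun j => v (i, j)) ⬝ᵥ S *ᵥ (fun j => v (i, j))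
      + 1 / 2 * (u ⬝ᵥ ((1 : Matrix ι ι ℝ) ⊗ₖ S⁻¹) *ᵥ u) := by
  rw [dotProduct_prod, dotProduct_one_kronecker_mulVec, Finset.mul_sum, Finset.mul_sum,
    ← Finset.sum_add_distrib]
  exact Finset.sum_le_sum fun i _ => hS.dotProduct_le_half_quad_add_half_quad_inv _ _

theorem dotProduct_le_dotProduct_abs {u v c : ι → ℝ} (h : ∀ i, |v i| ≤ c i) :
    u ⬝ᵥ v ≤ c ⬝ᵥ fun i => |u i| := by
  refine Finset.sum_le_sum fun i _ => ?_
  calc u i * v i ≤ |u i| * |v i| := by rw [← abs_mul]; exact le_abs_self _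
    _ ≤ c i * |u i| := by rw [mul_comm]; exact mul_le_mul_of_nonneg_right (h i) (abs_nonneg _)

end Matrix

section Smoothing

variable {n l m N : ℕ} (A : Matrix (Fin n) (Fin n) ℝ) (B : Matrix (Fin n) (Fin l) ℝ)
  (C : Matrix (Fin m) (Fin n) ℝ)

theorem traj_eq_pow_mulVec_add_sum (x0 : Fin n → ℝ) (w : ℕ → Fin l → ℝ) (k : ℕ) :
    traj A B x0 w k = A ^ k *ᵥ x0 + ∑ i ∈ Finset.range k, (A ^ (k - 1 - i) * B) *ᵥ w i := by
  induction k with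
  | zero => simp [traj]
  | succ k ih =>
    have hshift : A *ᵥ ∑ i ∈ Finset.range k, (A ^ (k - 1 - i) * B) *ᵥ w i
        = ∑ i ∈ Finset.range k, (A ^ (k + 1 - 1 - i) * B) *ᵥ w i := by
      rw [mulVec_sum]
      refine Finset.sum_congr rfl fun i hi => ?_
      rw [mulVec_mulVec, ← Matrix.mul_assoc, ← pow_succ',
        show k + 1 - 1 - i = k - 1 - i + 1 by have := Finset.mem_range.mp hi; omega]
    rw [traj, ih, mulVec_add, mulVec_mulVec, ← pow_succ', hshift, Finset.sum_range_succ]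
    simp [add_assoc]

theorem Fmat_mulVec_apply (w : ℕ → Fin l → ℝ) (k : Fin N) (j : Fin m) :
    (Fmat N A B C *ᵥ fun q => w q.1 q.2) (k, j)
      = (∑ i ∈ Finset.range (k + 1), (C * A ^ (k - i) * B) *ᵥ w i) j := by
  set g : ℕ → ℝ := fun i => if i ≤ k then ((C * A ^ (k - i) * B) *ᵥ w i) j else 0
  have hrow : (Fmat N A B C *ᵥ fun q => w q.1 q.2) (k, j) = ∑ i ∈ Finset.range N, g i := by
    rw [← Fin.sum_univ_eq_sum_range g]
    simp only [mulVec, dotProduct, Fintype.sum_prod_type, Fmat, g]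
    refine Finset.sum_congr rfl fun i _ => ?_
    split_ifs <;> simp
  rw [hrow, Finset.sum_apply, ← Finset.sum_subset (Finset.range_subset_range.mpr k.2)]
  · refine Finset.sum_congr rfl fun i hi => ?_
    simp [g, Nat.lt_succ_iff.mp (Finset.mem_range.mp hi)]
  · intro i _ hi
    simp [g, Nat.lt_succ_iff.not.mp (Finset.mem_range.not.mp hi)]

theorem Omat_mulVec_add_Fmat_mulVec (x0 : Fin n → ℝ) (w : ℕ → Fin l → ℝ) :
    Omat N A C *ᵥ x0 + Fmat N A B C *ᵥ (fun q => w q.1 q.2)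
      = fun p => (C *ᵥ traj A B x0 w (p.1 + 1)) p.2 := by
  funext ⟨k, j⟩
  rw [Pi.add_apply, Fmat_mulVec_apply, traj_eq_pow_mulVec_add_sum, mulVec_add, mulVec_mulVec,
    mulVec_sum, Pi.add_apply]
  congr 1
  refine congrFun (Finset.sum_congr rfl fun i _ => ?_) j
  rw [mulVec_mulVec, ← Matrix.mul_assoc, Nat.add_sub_cancel]

theorem Yvec_eq_sub_Omat_mulVec (xbar : Fin n → ℝ) (y : ℕ → Fin m → ℝ) :
    Yvec N A C xbar y = (fun p => y (p.1 + 1) p.2) - Omat N A C *ᵥ xbar :=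
  rfl

theorem Qinv_eq_one_kronecker (Q : Matrix (Fin l) (Fin l) ℝ) : Qinv N Q = 1 ⊗ₖ Q⁻¹ := by
  ext p q
  simp [Qinv, one_apply]

theorem Rinv_eq_one_kronecker (R : Matrix (Fin m) (Fin m) ℝ) : Rinv N R = 1 ⊗ₖ R⁻¹ := by
  ext p q
  simp [Rinv, one_apply]

theorem dotProduct_Mmat_mulVec (P : Matrix (Fin n) (Fin n) ℝ) (Q : Matrix (Fin l) (Fin l) ℝ)
    (R : Matrix (Fin m) (Fin m) ℝ) (Θ : Fin N × Fin m → ℝ) :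
    Θ ⬝ᵥ Mmat N A B C P Q R *ᵥ Θ
      = (Θ ᵥ* Fmat N A B C) ⬝ᵥ (1 ⊗ₖ Q⁻¹) *ᵥ (Θ ᵥ* Fmat N A B C)
        + Θ ⬝ᵥ (1 ⊗ₖ R⁻¹) *ᵥ Θ + (Θ ᵥ* Omat N A C) ⬝ᵥ P⁻¹ *ᵥ (Θ ᵥ* Omat N A C) := by
  rw [Mmat, add_mulVec, add_mulVec, dotProduct_add, dotProduct_add,
    dotProduct_mul_mul_transpose_mulVec, dotProduct_mul_mul_transpose_mulVec,
    Qinv_eq_one_kronecker, Rinv_eq_one_kronecker]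

end Smoothing

theorem eps_insensitive_weak_duality_general
    (n l m N : ℕ)
    (A : Matrix (Fin n) (Fin n) ℝ) (B : Matrix (Fin n) (Fin l) ℝ)
    (C : Matrix (Fin m) (Fin n) ℝ)
    (P : Matrix (Fin n) (Fin n) ℝ) (Q : Matrix (Fin l) (Fin l) ℝ)
    (R : Matrix (Fin m) (Fin m) ℝ)
    (hP : P.PosDef) (hQ : Q.PosDef) (hR : R.PosDef)
    (xbar : Fin n → ℝ) (y : ℕ → Fin m → ℝ)
    (ε : Fin m → ℝ)
    (xt0 : Fin n → ℝ) (wt : ℕ → Fin l → ℝ) (ηt : Fin N → Fin m → ℝ)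
    (hηt : ∀ (k : Fin N) (i : Fin m), |ηt k i| ≤ ε i)
    (Θ : Fin N × Fin m → ℝ) :
    -(1 / 2) * (Θ ⬝ᵥ Mmat N A B C P Q R *ᵥ Θ) - (fun q => ε q.2) ⬝ᵥ (fun q => |Θ q|)
        + Θ ⬝ᵥ Yvec N A C xbar y
      ≤ epsCost N A B C P Q R xbar y xt0 wt ηt := by
  set W : Fin N × Fin l → ℝ := fun q => wt q.1 q.2
  set H : Fin N × Fin m → ℝ := fun p => ηt p.1 p.2
  set r : Fin N × Fin m → ℝ := fun p =>
    y (p.1 + 1) p.2 - (C *ᵥ traj A B xt0 wt (p.1 + 1)) p.2 - H p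
  have hY : Yvec N A C xbar y = r + Omat N A C *ᵥ (xt0 - xbar) + Fmat N A B C *ᵥ W + H := by
    funext p
    have hout_p := congrFun (Omat_mulVec_add_Fmat_mulVec A B C xt0 wt) p
    simp only [Pi.add_apply] at hout_p
    simp only [Yvec_eq_sub_Omat_mulVec, mulVec_sub, r, Pi.add_apply, Pi.sub_apply]
    linarith
  have hJ : epsCost N A B C P Q R xbar y xt0 wt ηt
      = 1 / 2 * ((xt0 - xbar) ⬝ᵥ P *ᵥ (xt0 - xbar)
        + ∑ k : Fin N, (fun j => W (k, j)) ⬝ᵥ Q *ᵥ (fun j => W (k, j))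
        + ∑ k : Fin N, (fun j => r (k, j)) ⬝ᵥ R *ᵥ (fun j => r (k, j))) := by
    rw [epsCost, ← Fin.sum_univ_eq_sum_range (fun k => wt k ⬝ᵥ Q *ᵥ wt k)]
    rfl
  rw [dotProduct_Mmat_mulVec, hY, dotProduct_add, dotProduct_add, dotProduct_add,
    dotProduct_mulVec Θ (Omat N A C), dotProduct_mulVec Θ (Fmat N A B C), hJ]
  linarith [hP.dotProduct_le_half_quad_add_half_quad_inv (Θ ᵥ* Omat N A C) (xt0 - xbar),
    hQ.dotProduct_le_sum_quad_add_quad_one_kronecker_inv (Θ ᵥ* Fmat N A B C) W,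
    hR.dotProduct_le_sum_quad_add_quad_one_kronecker_inv Θ r,
    dotProduct_le_dotProduct_abs (u := Θ) (v := H) (c := fun q => ε q.2) fun q => hηt q.1 q.2]

/-- **Weak duality for ε-insensitive smoothing**: the primal ε-insensitive cost of any feasible
tuple dominates the dual objective `−½ΘᵀMΘ − ε̄ᵀ|Θ| + ΘᵀY` for every `Θ`. -/
theorem eps_insensitive_weak_duality
    (n l m N : ℕ) (hN : 1 ≤ N)
    (A : Matrix (Fin n) (Fin n) ℝ) (B : Matrix (Fin n) (Fin l) ℝ)
    (C : Matrix (Fin m) (Fin n) ℝ)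
    (P : Matrix (Fin n) (Fin n) ℝ) (Q : Matrix (Fin l) (Fin l) ℝ)
    (R : Matrix (Fin m) (Fin m) ℝ)
    (hP : P.PosDef) (hQ : Q.PosDef) (hR : R.PosDef)
    (xbar : Fin n → ℝ) (y : ℕ → Fin m → ℝ)
    (ε : Fin m → ℝ) (hε : ∀ i, 0 < ε i)
    (xt0 : Fin n → ℝ) (wt : ℕ → Fin l → ℝ) (ηt : Fin N → Fin m → ℝ)
    (hηt : ∀ (k : Fin N) (i : Fin m), |ηt k i| ≤ ε i)
    (Θ : Fin N × Fin m → ℝ) :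
    -(1 / 2) * (Θ ⬝ᵥ Mmat N A B C P Q R *ᵥ Θ) - (fun q => ε q.2) ⬝ᵥ (fun q => |Θ q|)
        + Θ ⬝ᵥ Yvec N A C xbar y
      ≤ epsCost N A B C P Q R xbar y xt0 wt ηt :=
  eps_insensitive_weak_duality_general n l m N A B C P Q R hP hQ hR xbar y ε xt0 wt ηt hηt Θ
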